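/- Let k be a commutative ring and let f : X → Y be a morphism of simplicial unbounded chain complexes over k. For n ≥ 1, let DXₙ := Σ_{0 ≤ i ≤ n−1} im(sᵢ : Xₙ₋₁ → Xₙ) ⊆ Xₙ denote the degenerate subobject, and similarly for Y; since f commutes with degeneracies, fₙ restricts to a map Dfₙ : DXₙ → DYₙ. If f is an objectwise weak equivalence (each fₙ is a quasi-isomorphism), then Dfₙ : DXₙ → DYₙ is a quasi-isomorphism for each n ≥ 1. -/

import Mathlib

/-!
The degenerate subobject `DXₙ₊₁` is a natural retract of `Xₙ₊₁`: it is the image of the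
Dold–Kan idempotent `Q∞ = 1 - P∞`, and `Q∞` factors through `DXₙ₊₁` by the decomposition
`Q∞ = Σᵢ Pᵢ ≫ δ ≫ σ`. Hence `Dfₙ₊₁` is a retract of `fₙ₊₁` in the arrow category, and
quasi-isomorphisms are stable under retracts.
-/

open CategoryTheory CategoryTheory.Limits Opposite

variable (k : Type) [CommRing k]

/-- The degenerate subobject `DXₙ₊₁ = Σ_{0 ≤ i ≤ n} im(sᵢ : Xₙ → Xₙ₊₁)` of a simplicial
unbounded chain complex over `k`. -/
noncomputable def DSub (X : SimplicialObject (ChainComplex (ModuleCat.{0} k) ℤ)) (n : ℕ) :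
    Subobject (X.obj (op (SimplexCategory.mk (n + 1)))) :=
  Finset.univ.sup fun i : Fin (n + 1) => imageSubobject (X.σ i)

namespace DSub

open AlgebraicTopology AlgebraicTopology.DoldKan Simplicial

variable {k}
variable (X : SimplicialObject (ChainComplex (ModuleCat.{0} k) ℤ)) (n : ℕ)

lemma imageSubobject_σ_le (i : Fin (n + 1)) : imageSubobject (X.σ i) ≤ DSub k X n :=
  Finset.le_sup (f := fun i : Fin (n + 1) => imageSubobject (X.σ i)) (Finset.mem_univ i)

lemma factors_σ (i : Fin (n + 1)) : (DSub k X n).Factors (X.σ i) :=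
  Subobject.factors_of_le (X.σ i) (imageSubobject_σ_le X n i)
    (by simpa using imageSubobject_factors_comp_self (f := X.σ i) (𝟙 _))

lemma arrow_comp_PInfty_f : (DSub k X n).arrow ≫ PInfty.f (n + 1) = 0 := by
  have hle : DSub k X n ≤ kernelSubobject (PInfty.f (n + 1) : X _⦋n + 1⦌ ⟶ _) :=
    Finset.sup_le fun i _ =>
      imageSubobject_le _
        (factorThruImageSubobject _ ≫ imageToKernel _ _ (σ_comp_PInfty X i)) (by simp)
  rw [← Subobject.ofLE_arrow hle, Category.assoc, kernelSubobject_arrow_comp, comp_zero]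

lemma arrow_comp_QInfty_f : (DSub k X n).arrow ≫ QInfty.f (n + 1) = (DSub k X n).arrow := by
  simp [QInfty, arrow_comp_PInfty_f]

noncomputable def retraction :
    (X _⦋n + 1⦌ : ChainComplex (ModuleCat.{0} k) ℤ) ⟶ (DSub k X n : ChainComplex _ ℤ) :=
  ∑ i : Fin (n + 1),
    (P i).f (n + 1) ≫ X.δ i.rev.succ ≫ (DSub k X n).factorThru (X.σ i.rev) (factors_σ X n i.rev)

lemma retraction_comp_arrow : retraction X n ≫ (DSub k X n).arrow = QInfty.f (n + 1) := by
  rw [retraction, Preadditive.sum_comp, QInfty_f, decomposition_Q n (n + 1),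
    Finset.filter_true_of_mem fun i _ => i.isLt]
  exact Finset.sum_congr rfl fun i _ => by simp

lemma arrow_comp_retraction : (DSub k X n).arrow ≫ retraction X n = 𝟙 _ := by
  rw [← cancel_mono (DSub k X n).arrow, Category.assoc, retraction_comp_arrow,
    arrow_comp_QInfty_f, Category.id_comp]

variable {X} {Y : SimplicialObject (ChainComplex (ModuleCat.{0} k) ℤ)} (f : X ⟶ Y) {n}
variable {Df : (DSub k X n : ChainComplex (ModuleCat.{0} k) ℤ) ⟶ (DSub k Y n : ChainComplex _ ℤ)}

lemma retraction_naturality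
    (hDf : Df ≫ (DSub k Y n).arrow = (DSub k X n).arrow ≫ f.app (op ⦋n + 1⦌)) :
    retraction X n ≫ Df = f.app (op ⦋n + 1⦌) ≫ retraction Y n := by
  rw [← cancel_mono (DSub k Y n).arrow, Category.assoc, Category.assoc, hDf,
    ← Category.assoc, retraction_comp_arrow, retraction_comp_arrow]
  exact (QInfty_f_naturality (n + 1) f).symm

noncomputable def retractArrow
    (hDf : Df ≫ (DSub k Y n).arrow = (DSub k X n).arrow ≫ f.app (op ⦋n + 1⦌)) :
    RetractArrow Df (f.app (op ⦋n + 1⦌)) where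
  i := Arrow.homMk (DSub k X n).arrow (DSub k Y n).arrow hDf.symm
  r := Arrow.homMk (retraction X n) (retraction Y n) (retraction_naturality f hDf)
  retract := by ext <;> simp [arrow_comp_retraction]

end DSub

/-- If `f : X ⟶ Y` is an objectwise weak equivalence of simplicial unbounded
chain complexes over `k`, then for each `n ≥ 1` the restriction `Dfₙ : DXₙ ⟶ DYₙ` of `fₙ` to
the degenerate subobjects (i.e. the map commuting with the subobject inclusions) is a
quasi-isomorphism. -/
theorem quasiIso_degenerate_subobject_map
    {X Y : SimplicialObject (ChainComplex (ModuleCat.{0} k) ℤ)} (f : X ⟶ Y)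
    (hf : ∀ n : SimplexCategoryᵒᵖ, QuasiIso (f.app n)) (n : ℕ)
    (Df : ((DSub k X n : Subobject _) : ChainComplex (ModuleCat.{0} k) ℤ) ⟶
      ((DSub k Y n : Subobject _) : ChainComplex (ModuleCat.{0} k) ℤ))
    (hDf : Df ≫ (DSub k Y n).arrow =
      (DSub k X n).arrow ≫ f.app (op (SimplexCategory.mk (n + 1)))) :
    QuasiIso Df :=
  have := hf (op (SimplexCategory.mk (n + 1)))
  quasiIso_of_retractArrow (DSub.retractArrow f hDf)
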